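/- arXiv:1811.03586 — 2 statements merged into one kernel-verified Lean document; each statement's English description precedes it below -/
import Mathlib

section
/- If 1 - X² were expressible as σ₀ + σ₁·(1-X²)³ with σ₀, σ₁ sums of squares in ℝ[X], then evaluating at points near x = 1 yields a contradiction: 1 - X² does not belong to the quadratic module generated by (1-X²)³ in ℝ[X]. -/
open Polynomial

/-! Evaluated at `x > 1`, the identity `1 - X² = σ₀ + σ₁ (1 - X²)³` has negative left-hand side
`t = 1 - x²`, so `t ≥ σ₁(x) t³`, i.e. `σ₁(x) t² ≥ 1`. But `σ₁ (1 - X²)²` is continuous and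
vanishes at `x = 1`. -/

theorem IsSumSq.map {R S F : Type*} [Semiring R] [Semiring S] [FunLike F R S]
    [RingHomClass F R S] (f : F) {s : R} (hs : IsSumSq s) : IsSumSq (f s) := by
  induction hs with
  | zero => simp
  | sq_add a _ ih => simpa using ih.sq_add (f a)

theorem Polynomial.eval_nonneg_of_isSumSq {p : ℝ[X]} (hp : IsSumSq p) (x : ℝ) :
    0 ≤ p.eval x :=
  (hp.map (evalRingHom x)).nonneg

theorem one_le_mul_sq_of_eq_add_mul_pow_three {R : Type*} [CommRing R] [LinearOrder R]
    [IsStrictOrderedRing R] {a s₀ s₁ : R} (ha : a < 0) (hs₀ : 0 ≤ s₀)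
    (h : a = s₀ + s₁ * a ^ 3) : 1 ≤ s₁ * a ^ 2 := by
  refine (mul_le_mul_right_of_neg ha).mp ?_
  calc 1 * a = s₀ + s₁ * a ^ 3 := by rw [one_mul, ← h]
    _ ≥ s₁ * a ^ 2 * a := by linear_combination hs₀

/-- Stengle's example: `1 - X²` is not in the quadratic module generated by
`(1 - X²)³` in `ℝ[X]`. -/
theorem stmt_5 :
    ¬ ∃ σ₀ σ₁ : Polynomial ℝ, IsSumSq σ₀ ∧ IsSumSq σ₁ ∧
      1 - X ^ 2 = σ₀ + σ₁ * (1 - X ^ 2) ^ 3 := by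
  rintro ⟨σ₀, σ₁, hσ₀, -, hσ⟩
  set q : ℝ[X] := σ₁ * (1 - X ^ 2) ^ 2
  have hq : ∀ x ∈ Set.Ioi (1 : ℝ), 1 ≤ q.eval x := fun x hx => by
    have hx' : 1 - x ^ 2 < 0 := by nlinarith [Set.mem_Ioi.mp hx]
    have hσx := congrArg (eval x) hσ
    simp only [eval_add, eval_sub, eval_mul, eval_pow, eval_one, eval_X] at hσx
    simpa [q] using one_le_mul_sq_of_eq_add_mul_pow_three hx' (eval_nonneg_of_isSumSq hσ₀ x) hσx
  have hq₁ : 1 ≤ q.eval 1 :=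
    ge_of_tendsto (q.continuous.tendsto 1 |>.mono_left nhdsWithin_le_nhds)
      (eventually_nhdsWithin_of_forall hq)
  norm_num [q] at hq₁
end

section
/- For nonzero homogeneous polynomials g₁, …, g_s in ℝ[X₁,…,Xₙ], the norm of their product satisfies ‖g₁⋯g_s‖ ≤ ‖g₁‖⋯‖g_s‖, where ‖·‖ is the multinomial-scaled sup norm of coefficients. -/
/-!
Write `|α|` for the degree of a multi-index. If `f` is homogeneous of degree `p`, then
`coeff α (f * g) = ∑_{β + γ = α, |β| = p} coeff β f * coeff γ g`, and each term is bounded by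
`‖f‖ ‖g‖ binom(|β|, β) binom(|γ|, γ)`. Comparing the coefficients of `X^α` in
`(X₁ + ⋯ + Xₙ)^p (X₁ + ⋯ + Xₙ)^(|α| - p) = (X₁ + ⋯ + Xₙ)^|α|` shows that these products of
multinomial coefficients sum to `binom(|α|, α)`, so `‖f g‖ ≤ ‖f‖ ‖g‖`; induct on the number of
factors.
-/

open MvPolynomial

/-- The multinomial-scaled sup norm: writing `f = ∑ binom(|α|,α) a_α X^α`,
`mnorm f = max_α |a_α|`, where `a_α = coeff α f / binom(|α|,α)`. -/
noncomputable def mnorm {n : ℕ} (f : MvPolynomial (Fin n) ℝ) : ℝ :=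
  ⨆ α : Fin n →₀ ℕ, |coeff α f| / (Nat.multinomial Finset.univ α : ℝ)

open Finset

theorem Finsupp.multinomial_pos {σ : Type*} (d : σ →₀ ℕ) : 0 < d.multinomial :=
  d.multinomial_eq ▸ Nat.multinomial_pos _ _

theorem Finsupp.degree_add_degree_of_mem_antidiagonal {σ : Type*} [DecidableEq σ] {α : σ →₀ ℕ}
    {x : (σ →₀ ℕ) × (σ →₀ ℕ)} (hx : x ∈ antidiagonal α) :
    x.1.degree + x.2.degree = α.degree := by
  rw [← map_add, HasAntidiagonal.mem_antidiagonal.mp hx]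

theorem Finsupp.sum_antidiagonal_filter_degree_multinomial_mul {σ : Type*} [Fintype σ]
    [DecidableEq σ] (α : σ →₀ ℕ) {p : ℕ} (hp : p ≤ α.degree) :
    ∑ x ∈ antidiagonal α with x.1.degree = p, x.1.multinomial * x.2.multinomial =
      α.multinomial := by
  have h := congrArg (coeff α) (pow_add (∑ i, X i : MvPolynomial σ ℕ) p (α.degree - p))
  have hsum : ∀ d : σ →₀ ℕ, d.sum (fun _ m ↦ m) = d.degree := fun _ ↦ rfl
  simp only [Nat.add_sub_cancel' hp, coeff_mul, coeff_sum_X_pow_of_fintype, hsum, Nat.cast_id,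
    if_true] at h
  rw [h, Finset.sum_filter]
  refine Finset.sum_congr rfl fun x hx ↦ ?_
  have := Finsupp.degree_add_degree_of_mem_antidiagonal hx
  split_ifs <;> first | rfl | omega

theorem Finsupp.multinomial_univ {σ : Type*} [Fintype σ] (d : σ →₀ ℕ) :
    Nat.multinomial univ d = d.multinomial :=
  multinomial_of_support_subset (subset_univ _)

variable {n : ℕ}

theorem bddAbove_range_abs_coeff_div_multinomial (f : MvPolynomial (Fin n) ℝ) :
    BddAbove (Set.range fun α : Fin n →₀ ℕ ↦ |coeff α f| / (Nat.multinomial univ α : ℝ)) := by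
  refine ((f.support.finite_toSet.image
    fun α ↦ |coeff α f| / (Nat.multinomial univ α : ℝ)).insert 0).bddAbove.mono ?_
  rintro _ ⟨α, rfl⟩
  by_cases hα : coeff α f = 0
  · simp [hα]
  · exact Or.inr ⟨α, mem_support_iff.mpr hα, rfl⟩

theorem mnorm_nonneg (f : MvPolynomial (Fin n) ℝ) : 0 ≤ mnorm f :=
  Real.iSup_nonneg fun _ ↦ by positivity

theorem abs_coeff_le_mnorm_mul (f : MvPolynomial (Fin n) ℝ) (α : Fin n →₀ ℕ) :
    |coeff α f| ≤ mnorm f * α.multinomial := by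
  have h := le_ciSup (bddAbove_range_abs_coeff_div_multinomial f) α
  rwa [Finsupp.multinomial_univ, div_le_iff₀ (by exact_mod_cast Nat.multinomial_pos _ _)] at h

theorem mnorm_le_of_abs_coeff_le {f : MvPolynomial (Fin n) ℝ} {M : ℝ}
    (h : ∀ α, |coeff α f| ≤ M * α.multinomial) : mnorm f ≤ M :=
  ciSup_le fun α ↦ by
    rw [Finsupp.multinomial_univ, div_le_iff₀ (by exact_mod_cast Nat.multinomial_pos _ _)]
    exact h α

theorem mnorm_one_le : mnorm (1 : MvPolynomial (Fin n) ℝ) ≤ 1 := by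
  refine mnorm_le_of_abs_coeff_le fun α ↦ ?_
  rw [coeff_one, one_mul]
  calc |if 0 = α then (1 : ℝ) else 0| ≤ 1 := by split_ifs <;> simp
    _ ≤ α.multinomial := by exact_mod_cast α.multinomial_pos

theorem mnorm_mul_le_of_isHomogeneous {f : MvPolynomial (Fin n) ℝ} {p : ℕ}
    (hf : f.IsHomogeneous p) (g : MvPolynomial (Fin n) ℝ) :
    mnorm (f * g) ≤ mnorm f * mnorm g := by
  refine mnorm_le_of_abs_coeff_le fun α ↦ ?_
  by_cases hp : p ≤ α.degree
  · calc |coeff α (f * g)|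
        = |∑ x ∈ antidiagonal α with x.1.degree = p, coeff x.1 f * coeff x.2 g| := by
          rw [coeff_mul, sum_filter_of_ne fun x _ hx ↦
            by_contra fun h ↦ hx (by rw [hf.coeff_eq_zero h, zero_mul])]
      _ ≤ ∑ x ∈ antidiagonal α with x.1.degree = p,
            (mnorm f * x.1.multinomial) * (mnorm g * x.2.multinomial) := by
          refine (abs_sum_le_sum_abs _ _).trans (sum_le_sum fun x _ ↦ ?_)
          rw [abs_mul]
          exact mul_le_mul (abs_coeff_le_mnorm_mul f x.1) (abs_coeff_le_mnorm_mul g x.2)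
            (abs_nonneg _) (mul_nonneg (mnorm_nonneg f) (by positivity))
      _ = mnorm f * mnorm g * α.multinomial := by
          rw [← Finsupp.sum_antidiagonal_filter_degree_multinomial_mul α hp, Nat.cast_sum,
            Finset.mul_sum]
          refine sum_congr rfl fun x _ ↦ ?_
          push_cast
          ring
  · have hzero : coeff α (f * g) = 0 := by
      rw [coeff_mul]
      refine sum_eq_zero fun x hx ↦ ?_
      have := Finsupp.degree_add_degree_of_mem_antidiagonal hx
      rw [hf.coeff_eq_zero (by omega), zero_mul]
    rw [hzero, abs_zero]
    exact mul_nonneg (mul_nonneg (mnorm_nonneg f) (mnorm_nonneg g)) (by positivity)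

theorem mnorm_prod_le_of_isHomogeneous {ι : Type*} (s : Finset ι)
    (g : ι → MvPolynomial (Fin n) ℝ) {d : ι → ℕ} (hhom : ∀ i ∈ s, (g i).IsHomogeneous (d i)) :
    mnorm (∏ i ∈ s, g i) ≤ ∏ i ∈ s, mnorm (g i) := by
  classical
  induction s using Finset.induction_on with
  | empty => simpa using mnorm_one_le
  | insert a s ha ih =>
    rw [prod_insert ha, prod_insert ha]
    calc mnorm (g a * ∏ i ∈ s, g i)
        ≤ mnorm (g a) * mnorm (∏ i ∈ s, g i) :=
          mnorm_mul_le_of_isHomogeneous (hhom a (mem_insert_self a s)) _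
      _ ≤ mnorm (g a) * ∏ i ∈ s, mnorm (g i) :=
          mul_le_mul_of_nonneg_left (ih fun i hi ↦ hhom i (mem_insert_of_mem hi)) (mnorm_nonneg _)

theorem stmt_7_general {n s : ℕ} (g : Fin s → MvPolynomial (Fin n) ℝ) (d : Fin s → ℕ)
    (hhom : ∀ i, (g i).IsHomogeneous (d i)) :
    mnorm (∏ i, g i) ≤ ∏ i, mnorm (g i) :=
  mnorm_prod_le_of_isHomogeneous univ g fun i _ ↦ hhom i

theorem stmt_7 {n s : ℕ} (g : Fin s → MvPolynomial (Fin n) ℝ) (d : Fin s → ℕ)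
    (hg : ∀ i, g i ≠ 0) (hhom : ∀ i, (g i).IsHomogeneous (d i)) :
    mnorm (∏ i, g i) ≤ ∏ i, mnorm (g i) :=
  stmt_7_general g d hhom
end
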